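/- Let ω > 0, R ∈ ℝ, and let a = (0, a₂, a₃) ∈ ℂ³ have vanishing first component. For ζ ∈ ℝ³ \ {0} define φ(ζ) := ∫₀^∞ e^{−(|ζ|² − i R ζ₁) t} O(ωt)ᵀ a dt, where ζ₁ is the first coordinate of ζ. Then, setting α₊ := a₂ + i a₃, α₋ := a₂ − i a₃ and J_±(ζ) := (|ζ|² − i(Rζ₁ ± ω))^{−1}, one has φ(ζ) = (1/2) · ( 0, α₋ J₊(ζ) + α₊ J₋(ζ), i α₋ J₊(ζ) − i α₊ J₋(ζ) ). -/

import Mathlib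

open MeasureTheory
open scoped ENNReal

noncomputable section

open Set Filter Topology in
private lemma integrable_cexp_neg_mul' (c : ℂ) (hc : 0 < c.re) :
    IntegrableOn (fun t : ℝ => Complex.exp (-(c * t))) (Set.Ioi 0) := by
  apply Integrable.mono' (exp_neg_integrableOn_Ioi 0 hc)
  · exact (Complex.continuous_exp.comp (by fun_prop)).aestronglyMeasurable
  · filter_upwards with t
    simp [Complex.norm_exp, Complex.mul_re]

open Set Filter Topology in
private lemma integral_cexp_neg_mul' (c : ℂ) (hc : 0 < c.re) :
    ∫ t in Set.Ioi (0:ℝ), Complex.exp (-(c * t)) = c⁻¹ := by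
  have hderiv : ∀ t ∈ Set.Ioi (0:ℝ),
      HasDerivAt (fun t : ℝ => -c⁻¹ * Complex.exp (-(c * t)))
        (Complex.exp (-(c * t))) t := by
    intro t _
    have h1 : HasDerivAt (fun t : ℝ => -(c * (t:ℂ))) (-c) t := by
      have h := ((Complex.ofRealCLM.hasDerivAt (x := t)).const_mul c).neg
      simp only [Complex.ofRealCLM_apply, Complex.ofReal_one, mul_one] at h
      exact h
    have := (h1.cexp).const_mul (-c⁻¹)
    have hc0 : c ≠ 0 := fun h => by simp [h] at hc
    rw [mul_comm (Complex.exp _), ← mul_assoc, neg_mul_neg, inv_mul_cancel₀ hc0, one_mul] at this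
    exact this
  have htend : Tendsto (fun t : ℝ => -c⁻¹ * Complex.exp (-(c * t))) atTop (𝓝 0) := by
    rw [tendsto_zero_iff_norm_tendsto_zero]
    have : Tendsto (fun t : ℝ => ‖(-c⁻¹ : ℂ)‖ * Real.exp (-c.re * t)) atTop
        (𝓝 (‖(-c⁻¹:ℂ)‖ * 0)) := by
      apply Tendsto.const_mul
      exact Real.tendsto_exp_atBot.comp (tendsto_id.const_mul_atTop_of_neg (neg_neg_iff_pos.2 hc))
    simpa [Complex.norm_exp, Complex.mul_re] using this
  have := integral_Ioi_of_hasDerivAt_of_tendsto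
    (f := fun t : ℝ => -c⁻¹ * Complex.exp (-(c * t)))
    ((Complex.continuous_exp.comp (by fun_prop)).const_smul (-c⁻¹)).continuousWithinAt
    hderiv (integrable_cexp_neg_mul' c hc) htend
  simpa using this

abbrev E3 := EuclideanSpace ℝ (Fin 3)
abbrev C3 := EuclideanSpace ℂ (Fin 3)

/-- The transpose `O(θ)ᵀ` of the rotation about the first axis (rows
`(1,0,0), (0,cos θ, sin θ), (0,-sin θ, cos θ)`), acting ℂ-linearly on `ℂ³`. -/
def OrotTC (θ : ℝ) (w : C3) : C3 :=
  (WithLp.equiv 2 (Fin 3 → ℂ)).symm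
    ![w 0, (Real.cos θ : ℂ) * w 1 + (Real.sin θ : ℂ) * w 2,
      -(Real.sin θ : ℂ) * w 1 + (Real.cos θ : ℂ) * w 2]

/-- `φ(ζ) = ∫₀^∞ e^{-(|ζ|²-iRζ₁)t} O(ωt)ᵀ a dt`. -/
def phiRot (ω R : ℝ) (a : C3) (ζ : E3) : C3 :=
  ∫ t in Set.Ioi (0 : ℝ),
    Complex.exp (-((‖ζ‖ ^ 2 : ℂ) - Complex.I * (R : ℂ) * (ζ 0 : ℂ)) * (t : ℂ)) •
      OrotTC (ω * t) a

/-- Explicit computation of the oscillatory integral `φ`: with `α₊ = a₂ + ia₃`,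
`α₋ = a₂ - ia₃` and `J_± = (|ζ|² - i(Rζ₁ ± ω))⁻¹`, one has
`φ(ζ) = ½ (0, α₋J₊ + α₊J₋, iα₋J₊ - iα₊J₋)`. -/
theorem stmt7 (ω R : ℝ) (hω : 0 < ω) (a : C3) (ha : a 0 = 0) (ζ : E3) (hζ : ζ ≠ 0) :
    phiRot ω R a ζ =
      (1 / 2 : ℂ) •
        ((WithLp.equiv 2 (Fin 3 → ℂ)).symm
          ![0,
            (a 1 - Complex.I * a 2) * ((‖ζ‖ ^ 2 : ℂ) - Complex.I * ((R * ζ 0 + ω : ℝ) : ℂ))⁻¹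
              + (a 1 + Complex.I * a 2) *
                  ((‖ζ‖ ^ 2 : ℂ) - Complex.I * ((R * ζ 0 - ω : ℝ) : ℂ))⁻¹,
            Complex.I * (a 1 - Complex.I * a 2) *
                ((‖ζ‖ ^ 2 : ℂ) - Complex.I * ((R * ζ 0 + ω : ℝ) : ℂ))⁻¹
              - Complex.I * (a 1 + Complex.I * a 2) *
                  ((‖ζ‖ ^ 2 : ℂ) - Complex.I * ((R * ζ 0 - ω : ℝ) : ℂ))⁻¹] : C3) := by
  set z : ℂ := (‖ζ‖ ^ 2 : ℂ) - Complex.I * (R : ℂ) * (ζ 0 : ℂ) with hz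
  set c₁ : ℂ := (‖ζ‖ ^ 2 : ℂ) - Complex.I * ((R * ζ 0 + ω : ℝ) : ℂ) with hc₁
  set c₂ : ℂ := (‖ζ‖ ^ 2 : ℂ) - Complex.I * ((R * ζ 0 - ω : ℝ) : ℂ) with hc₂
  have hnorm : (0 : ℝ) < ‖ζ‖ ^ 2 := by
    have := norm_pos_iff.mpr hζ; positivity
  have hre₁ : 0 < c₁.re := by
    simp [hc₁, Complex.sub_re, Complex.mul_re, sq, ← Complex.ofReal_mul]
    simpa [sq] using hnorm
  have hre₂ : 0 < c₂.re := by
    simp [hc₂, Complex.sub_re, Complex.mul_re, sq, ← Complex.ofReal_mul]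
    simpa [sq] using hnorm
  set u : C3 := (WithLp.equiv 2 (Fin 3 → ℂ)).symm
    ![0, a 1 - Complex.I * a 2, Complex.I * (a 1 - Complex.I * a 2)] with hu
  set v : C3 := (WithLp.equiv 2 (Fin 3 → ℂ)).symm
    ![0, a 1 + Complex.I * a 2, -(Complex.I * (a 1 + Complex.I * a 2))] with hv
  have key : ∀ t : ℝ, Complex.exp (-(z * t)) • OrotTC (ω * t) a =
      (1 / 2 : ℂ) • (Complex.exp (-(c₁ * t)) • u + Complex.exp (-(c₂ * t)) • v) := by
    intro t
    have e1 : Complex.exp (-(c₁ * t)) =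
        Complex.exp (-(z * t)) * Complex.exp (((ω * t : ℝ) : ℂ) * Complex.I) := by
      rw [← Complex.exp_add]; congr 1; rw [hc₁, hz]; push_cast; ring
    have e2 : Complex.exp (-(c₂ * t)) =
        Complex.exp (-(z * t)) * Complex.exp (-((ω * t : ℝ) : ℂ) * Complex.I) := by
      rw [← Complex.exp_add]; congr 1; rw [hc₂, hz]; push_cast; ring
    rw [e1, e2]
    ext i
    fin_cases i
    · simp [OrotTC, hu, hv, ha]
    · simp [OrotTC, hu, hv, ha, Complex.ofReal_cos, Complex.ofReal_sin,
        Complex.cos, Complex.sin]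
      ring_nf
      try simp [Complex.I_sq]
      try ring_nf
    · simp [OrotTC, hu, hv, ha, Complex.ofReal_cos, Complex.ofReal_sin,
        Complex.cos, Complex.sin]
      ring_nf
      try simp [Complex.I_sq]
      try ring_nf
  have int1 := (integrable_cexp_neg_mul' c₁ hre₁).smul_const u
  have int2 := (integrable_cexp_neg_mul' c₂ hre₂).smul_const v
  calc phiRot ω R a ζ
      = ∫ t in Set.Ioi (0:ℝ), (1 / 2 : ℂ) •
          (Complex.exp (-(c₁ * t)) • u + Complex.exp (-(c₂ * t)) • v) := by
        rw [phiRot]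
        refine setIntegral_congr_fun measurableSet_Ioi fun t _ => ?_
        rw [← key t, neg_mul]
    _ = (1 / 2 : ℂ) • ((∫ t in Set.Ioi (0:ℝ), Complex.exp (-(c₁ * t))) • u +
          (∫ t in Set.Ioi (0:ℝ), Complex.exp (-(c₂ * t))) • v) := by
        rw [integral_smul, integral_add int1 int2, integral_smul_const, integral_smul_const]
    _ = _ := by
        rw [integral_cexp_neg_mul' c₁ hre₁, integral_cexp_neg_mul' c₂ hre₂]
        ext i
        fin_cases i <;>
          simp [hu, hv, PiLp.smul_apply, PiLp.add_apply, WithLp.equiv_symm_apply,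
            smul_eq_mul] <;> ring
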